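/- arXiv:1008.5046 — 3 statements merged into one kernel-verified Lean document; each statement's English description precedes it below -/
import Mathlib

section
/- For every positive integer r and every real x with 0 ≤ x ≤ 2π, ∑_{n=1}^∞ sin(nx)/n^{2r+1} = ∑_{k=1}^{r} (−1)^{k−1} x^{2k−1} ζ(2r+2−2k)/(2k−1)! + (−1)^r ( (π/2)·x^{2r}/(2r)! − (1/2)·x^{2r+1}/(2r+1)! ). -/
/-!
The series is the Fourier sine series of an odd Bernoulli polynomial: on `[0, 2π]` it equals
`sinSeriesFactor r · B_{2r+1}(x / 2π)` (`hasSum_one_div_nat_pow_mul_sin`). Expanding `B_{2r+1}`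
in powers of its argument, the odd-degree coefficients are the even Bernoulli numbers `B_{2m}`,
which Euler's formula turns into `ζ(2m)`; among the even-degree coefficients only `B_1 = -1/2`
survives, and together with the leading coefficient `B_0 = 1` it gives the polynomial tail.
-/

open Real

/-- The Riemann zeta function at natural arguments `s > 1`, as a real series. -/
noncomputable def zetaR (s : ℕ) : ℝ := ∑' n : ℕ, 1 / (n + 1 : ℝ) ^ s

open Finset
open scoped Nat

theorem Finset.sum_range_two_mul {M : Type*} [AddCommMonoid M] (f : ℕ → M) (n : ℕ) :
    ∑ i ∈ range (2 * n), f i = ∑ j ∈ range n, (f (2 * j) + f (2 * j + 1)) := by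
  induction n with
  | zero => simp
  | succ n ih => rw [mul_add_one, sum_range_succ, sum_range_succ, ih, sum_range_succ, add_assoc]

theorem bernoulliFun_two_mul_add_one (r : ℕ) (t : ℝ) :
    bernoulliFun (2 * r + 1) t =
      ∑ j ∈ range (r + 1),
          ((2 * r + 1).choose (2 * j + 1) : ℝ) * bernoulli (2 * (r - j)) * t ^ (2 * j + 1)
        - (2 * r + 1) / 2 * t ^ (2 * r) := by
  simp only [bernoulliFun, Polynomial.bernoulli_def, Polynomial.map_sum, Polynomial.map_monomial,
    Polynomial.eval_finsetSum, Polynomial.eval_monomial, map_mul, map_natCast, eq_ratCast]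
  rw [show 2 * r + 1 + 1 = 2 * (r + 1) by ring, sum_range_two_mul, sum_add_distrib, add_comm,
    sub_eq_add_neg]
  congr 1
  · refine sum_congr rfl fun j _ => ?_
    rw [show 2 * r + 1 - (2 * j + 1) = 2 * (r - j) by omega]
    ring
  · rw [sum_eq_single r]
    · rw [show 2 * r + 1 - 2 * r = 1 by omega]
      simp only [bernoulli_one, Rat.cast_div, Rat.cast_neg, Rat.cast_one, Rat.cast_ofNat,
        Nat.choose_succ_self_right, Nat.cast_add, Nat.cast_mul, Nat.cast_ofNat, Nat.cast_one]
      ring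
    · intro j hj hjr
      rw [mem_range] at hj
      rw [bernoulli_eq_zero_of_odd ⟨r - j, by omega⟩ (by omega)]
      simp
    · simp

theorem zetaR_two_mul {m : ℕ} (hm : m ≠ 0) :
    zetaR (2 * m) =
      (-1) ^ (m + 1) * 2 ^ (2 * m - 1) * π ^ (2 * m) * bernoulli (2 * m) / (2 * m)! := by
  have h := (hasSum_nat_add_iff' 1).mpr (hasSum_zeta_nat hm)
  simp only [range_one, sum_singleton, CharP.cast_eq_zero, ne_eq, mul_eq_zero,
    OfNat.ofNat_ne_zero, hm, or_self, not_false_eq_true, zero_pow, div_zero, sub_zero,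
    Nat.cast_add, Nat.cast_one] at h
  exact h.tsum_eq

noncomputable def sinSeriesFactor (k : ℕ) : ℝ :=
  (-1) ^ (k + 1) * (2 * π) ^ (2 * k + 1) / 2 / (2 * k + 1)!

theorem hasSum_sin_mul_div_pow {k : ℕ} (hk : k ≠ 0) {x : ℝ} (hx0 : 0 ≤ x) (hx : x ≤ 2 * π) :
    HasSum (fun n : ℕ => sin ((n + 1 : ℝ) * x) / (n + 1 : ℝ) ^ (2 * k + 1))
      (sinSeriesFactor k * bernoulliFun (2 * k + 1) (x / (2 * π))) := by
  have hπ : 0 < 2 * π := by positivity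
  have hmem : x / (2 * π) ∈ Set.Icc (0 : ℝ) 1 := ⟨div_nonneg hx0 hπ.le, (div_le_one hπ).mpr hx⟩
  have hterm (n : ℕ) : 1 / ((n : ℝ) + 1) ^ (2 * k + 1) * sin (2 * π * (n + 1) * (x / (2 * π)))
      = sin ((n + 1 : ℝ) * x) / (n + 1 : ℝ) ^ (2 * k + 1) := by
    rw [mul_comm (2 * π), mul_assoc, mul_div_cancel₀ x hπ.ne', one_div_mul_eq_div]
  have h := (hasSum_nat_add_iff' 1).mpr (hasSum_one_div_nat_pow_mul_sin hk hmem)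
  simp only [range_one, sum_singleton, CharP.cast_eq_zero, mul_zero, zero_mul, sin_zero,
    sub_zero, Nat.cast_add, Nat.cast_one, hterm] at h
  exact h

theorem sinSeriesFactor_mul_bernoulli_term (j m : ℕ) (hm : m ≠ 0) (x : ℝ) :
    sinSeriesFactor (j + m) * (((2 * (j + m) + 1).choose (2 * j + 1) : ℝ) *
        bernoulli (2 * m) * (x / (2 * π)) ^ (2 * j + 1))
      = (-1) ^ j * x ^ (2 * j + 1) * zetaR (2 * m) / (2 * j + 1)! := by
  obtain ⟨m, rfl⟩ : ∃ m', m = m' + 1 := ⟨m - 1, by omega⟩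
  rw [sinSeriesFactor, zetaR_two_mul hm, Nat.cast_choose ℝ (by omega),
    show 2 * (j + (m + 1)) + 1 - (2 * j + 1) = 2 * (m + 1) by omega,
    show 2 * (m + 1) - 1 = 2 * m + 1 by omega]
  have hπ : 0 < π := pi_pos
  simp only [div_pow, mul_pow]
  field_simp
  ring

theorem sinSeriesFactor_mul_top_terms (r : ℕ) (x : ℝ) :
    sinSeriesFactor r *
        ((x / (2 * π)) ^ (2 * r + 1) - (2 * r + 1) / 2 * (x / (2 * π)) ^ (2 * r))
      = (-1) ^ r * (π / 2 * x ^ (2 * r) / (2 * r)! - 1 / 2 * x ^ (2 * r + 1) / (2 * r + 1)!) := by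
  rw [sinSeriesFactor, Nat.factorial_succ]
  push_cast
  have hπ : 0 < π := pi_pos
  simp only [div_pow, mul_pow]
  field_simp
  ring

theorem sinSeriesFactor_mul_bernoulliFun (r : ℕ) (x : ℝ) :
    sinSeriesFactor r * bernoulliFun (2 * r + 1) (x / (2 * π))
      = (∑ k ∈ Icc 1 r,
          (-1 : ℝ) ^ (k - 1) * x ^ (2 * k - 1) * zetaR (2 * r + 2 - 2 * k) / (2 * k - 1)!)
        + (-1) ^ r * (π / 2 * x ^ (2 * r) / (2 * r)! - 1 / 2 * x ^ (2 * r + 1) / (2 * r + 1)!) := by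
  rw [bernoulliFun_two_mul_add_one, sum_range_succ, Nat.sub_self, Nat.mul_zero, bernoulli_zero,
    Nat.choose_self, ← sinSeriesFactor_mul_top_terms, mul_sub, mul_sub, mul_add]
  simp only [Rat.cast_one, Nat.cast_one, one_mul, add_sub_assoc, add_left_inj]
  rw [← Ico_add_one_right_eq_Icc, sum_Ico_eq_sum_range, Nat.add_sub_cancel, mul_sum]
  refine sum_congr rfl fun j hj => ?_
  obtain ⟨m, rfl⟩ := Nat.exists_eq_add_of_le (mem_range.mp hj).le
  rw [Nat.add_sub_cancel_left, sinSeriesFactor_mul_bernoulli_term j m (by simp at hj; omega),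
    show 1 + j - 1 = j by omega, show 2 * (1 + j) - 1 = 2 * j + 1 by omega,
    show 2 * (j + m) + 2 - 2 * (1 + j) = 2 * m by omega]

theorem stmt_3 (r : ℕ) (hr : 0 < r) (x : ℝ) (hx0 : 0 ≤ x) (hx : x ≤ 2 * π) :
    HasSum (fun n : ℕ => Real.sin ((n + 1 : ℝ) * x) / (n + 1 : ℝ) ^ (2 * r + 1))
      ((∑ k ∈ Finset.Icc 1 r,
          (-1 : ℝ) ^ (k - 1) * x ^ (2 * k - 1) * zetaR (2 * r + 2 - 2 * k) /
            (Nat.factorial (2 * k - 1)))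
        + (-1 : ℝ) ^ r *
          (π / 2 * x ^ (2 * r) / (Nat.factorial (2 * r))
            - 1 / 2 * x ^ (2 * r + 1) / (Nat.factorial (2 * r + 1)))) :=
  sinSeriesFactor_mul_bernoulliFun r x ▸ hasSum_sin_mul_div_pow hr.ne' hx0 hx
end

section
/- For every positive integer r and every real x with −π ≤ x ≤ π, ∑_{n=1}^∞ (−1)^{n−1} cos(nx)/n^{2r} = ∑_{k=0}^{r−1} (−1)^k x^{2k} η(2r−2k)/(2k)! + (−1)^r x^{2r}/(2·(2r)!). -/
/-!
Replacing `x` by `x + π` turns the alternating series into the cosine Fourier series of the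
Bernoulli polynomial `B_{2r}` on `[0, 1]`, so the sum is `c_r B_{2r}(1/2 + x/(2π))` with
`c_r = (-1)^r (2π)^{2r} / (2 (2r)!)`. Expanding `B_{2r}` around `1/2` by Taylor's formula
(`B_n^{(i)} = n!/(n-i)! B_{n-i}`), the odd values `B_{2m+1}(1/2)` vanish, and the same series at
`x = 0` gives `η(2m) = c_m B_{2m}(1/2)`; the top term `B_0 = 1` gives `(-1)^r x^{2r}/(2 (2r)!)`.
-/

open Real Polynomial Finset Nat

/-- The Dirichlet eta function at natural arguments, as a real series. -/
noncomputable def etaR (s : ℕ) : ℝ := ∑' n : ℕ, (-1 : ℝ) ^ n / (n + 1 : ℝ) ^ s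

theorem Polynomial.iterate_derivative_bernoulli (i n : ℕ) :
    derivative^[i] (bernoulli n) = n.descFactorial i • bernoulli (n - i) := by
  induction i with
  | zero => simp
  | succ i ih =>
    rw [Function.iterate_succ_apply', ih, derivative_smul, derivative_bernoulli,
      Nat.descFactorial_succ, Nat.sub_sub]
    simp only [nsmul_eq_mul]
    push_cast
    ring

theorem Polynomial.hasseDeriv_map_bernoulli (i n : ℕ) :
    hasseDeriv i ((Polynomial.bernoulli n).map (algebraMap ℚ ℝ)) =
      n.choose i • (Polynomial.bernoulli (n - i)).map (algebraMap ℚ ℝ) := by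
  apply nsmul_right_injective (i.factorial_ne_zero)
  have h := congrFun (factorial_smul_hasseDeriv (R := ℝ) (k := i))
    ((Polynomial.bernoulli n).map (algebraMap ℚ ℝ))
  simp only [LinearMap.smul_apply] at h
  dsimp only
  rw [h, iterate_derivative_map, iterate_derivative_bernoulli, smul_smul,
    ← Nat.descFactorial_eq_factorial_mul_choose, ← coe_mapRingHom, map_nsmul]

theorem bernoulliFun_add (n : ℕ) (a b : ℝ) :
    bernoulliFun n (a + b) = ∑ i ∈ range (n + 1), n.choose i * bernoulliFun (n - i) a * b ^ i := by
  have hcoeff (i : ℕ) : (taylor a ((Polynomial.bernoulli n).map (algebraMap ℚ ℝ))).coeff i =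
      n.choose i * bernoulliFun (n - i) a := by
    rw [taylor_coeff, hasseDeriv_map_bernoulli, eval_smul, nsmul_eq_mul, bernoulliFun]
  have hdeg : (taylor a ((Polynomial.bernoulli n).map (algebraMap ℚ ℝ))).natDegree < n + 1 := by
    refine Nat.lt_succ_of_le (natDegree_le_iff_coeff_eq_zero.mpr fun i hi => ?_)
    rw [hcoeff, Nat.choose_eq_zero_of_lt hi, Nat.cast_zero, zero_mul]
  rw [bernoulliFun, add_comm, ← taylor_eval, eval_eq_sum_range' hdeg]
  simp only [hcoeff]

theorem Finset.sum_range_two_mul_add_one_of_odd {M : Type*} [AddCommMonoid M] {f : ℕ → M}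
    {r : ℕ} (hf : ∀ i < 2 * r, Odd i → f i = 0) :
    ∑ i ∈ range (2 * r + 1), f i = ∑ k ∈ range (r + 1), f (2 * k) := by
  induction r with
  | zero => simp
  | succ r ih =>
    rw [show 2 * (r + 1) + 1 = 2 * r + 1 + 1 + 1 by ring, sum_range_succ, sum_range_succ,
      ih fun i hi => hf i (by omega), hf _ (by omega) (odd_two_mul_add_one r), add_zero,
      sum_range_succ _ (r + 1)]
    rfl

theorem bernoulliFun_two_mul_half_add (r : ℕ) (b : ℝ) :
    bernoulliFun (2 * r) (2⁻¹ + b) =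
      ∑ k ∈ range (r + 1),
        (2 * r).choose (2 * k) * bernoulliFun (2 * (r - k)) 2⁻¹ * b ^ (2 * k) := by
  rw [bernoulliFun_add, sum_range_two_mul_add_one_of_odd]
  · simp only [Nat.mul_sub]
  · rintro i hi ⟨j, rfl⟩
    rw [show 2 * r - (2 * j + 1) = 2 * (r - j - 1) + 1 by omega, bernoulliFun_eval_half_eq_zero,
      mul_zero, zero_mul]

noncomputable def bernoulliEtaCoeff (k : ℕ) : ℝ := (-1) ^ k * (2 * π) ^ (2 * k) / (2 * (2 * k)!)

theorem hasSum_neg_one_pow_mul_cos_div_pow {k : ℕ} (hk : k ≠ 0) {x : ℝ}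
    (hx : x ∈ Set.Icc (-π) π) :
    HasSum (fun n : ℕ => (-1 : ℝ) ^ n * cos ((n + 1 : ℝ) * x) / (n + 1 : ℝ) ^ (2 * k))
      (bernoulliEtaCoeff k * bernoulliFun (2 * k) (2⁻¹ + x / (2 * π))) := by
  have hπ := pi_pos
  have ht : 2⁻¹ + x / (2 * π) ∈ Set.Icc (0 : ℝ) 1 := by
    obtain ⟨h₀, h₁⟩ := hx
    constructor
    · rw [← neg_le_iff_add_nonneg', le_div_iff₀ (by positivity)]
      linarith
    · rw [← le_sub_iff_add_le', div_le_iff₀ (by positivity)]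
      linarith
  have hcos (n : ℕ) : cos (2 * π * ↑(n + 1) * (2⁻¹ + x / (2 * π))) =
      -((-1) ^ n * cos ((n + 1 : ℝ) * x)) := by
    rw [show 2 * π * ↑(n + 1) * (2⁻¹ + x / (2 * π)) = (n + 1 : ℝ) * x + ↑(n + 1) * π by
      field_simp; push_cast; ring, cos_add_nat_mul_pi, pow_succ]
    ring
  have H := (hasSum_nat_add_iff' 1).mpr (hasSum_one_div_nat_pow_mul_cos hk ht)
  simp only [hcos, sum_range_one, Nat.cast_zero, zero_pow (mul_ne_zero two_ne_zero hk),
    div_zero, zero_mul, sub_zero] at H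
  convert! H.neg using 1
  · funext n
    push_cast
    ring
  · unfold bernoulliEtaCoeff bernoulliFun
    rw [pow_succ]
    ring

theorem etaR_two_mul {k : ℕ} (hk : k ≠ 0) :
    etaR (2 * k) = bernoulliEtaCoeff k * bernoulliFun (2 * k) 2⁻¹ := by
  have H := hasSum_neg_one_pow_mul_cos_div_pow hk (x := 0) ⟨by linarith [pi_pos], pi_pos.le⟩
  simp only [mul_zero, cos_zero, mul_one, zero_div, add_zero] at H
  exact H.tsum_eq

theorem bernoulliEtaCoeff_mul_choose {k r : ℕ} (hk : k ≤ r) :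
    bernoulliEtaCoeff r * (2 * r).choose (2 * k) =
      (-1) ^ k * (2 * π) ^ (2 * k) / (2 * k)! * bernoulliEtaCoeff (r - k) := by
  obtain ⟨m, rfl⟩ := Nat.exists_eq_add_of_le hk
  rw [Nat.add_sub_cancel_left, mul_add, Nat.cast_choose ℝ (by omega), Nat.add_sub_cancel_left]
  unfold bernoulliEtaCoeff
  rw [mul_add, pow_add, pow_add]
  field_simp

theorem stmt_8 (r : ℕ) (hr : 0 < r) (x : ℝ) (hx0 : -π ≤ x) (hx : x ≤ π) :
    HasSum (fun n : ℕ => (-1 : ℝ) ^ n * Real.cos ((n + 1 : ℝ) * x) / (n + 1 : ℝ) ^ (2 * r))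
      ((∑ k ∈ Finset.range r,
          (-1 : ℝ) ^ k * x ^ (2 * k) * etaR (2 * r - 2 * k) / (Nat.factorial (2 * k)))
        + (-1 : ℝ) ^ r * x ^ (2 * r) / (2 * (Nat.factorial (2 * r)))) := by
  have H := hasSum_neg_one_pow_mul_cos_div_pow hr.ne' ⟨hx0, hx⟩
  rw [bernoulliFun_two_mul_half_add, mul_sum, sum_range_succ] at H
  convert H using 2
  · refine sum_congr rfl fun k hk => ?_
    have hkr : k < r := mem_range.mp hk
    rw [← Nat.mul_sub, etaR_two_mul (by omega), ← mul_assoc (bernoulliEtaCoeff r),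
      ← mul_assoc (bernoulliEtaCoeff r), bernoulliEtaCoeff_mul_choose hkr.le, div_pow]
    field_simp
  · simp only [bernoulliEtaCoeff, choose_self, cast_one, tsub_self, mul_zero, bernoulliFun_zero,
      mul_one, div_pow, one_mul]
    field_simp
end

section
/- The series ∑_{n=1}^∞ (−1)^{⌊n/2⌋}/(2n−1)^6 converges to √2 · 361π⁶/491520. -/
/-!
For `x = 1/8` the odd-indexed terms of the Fourier series
`∑ cos (2πnx) / n⁶ = (2π)⁶ / (2 · 6!) · B₆(x)` are
`cos ((2m+1)π/4) / (2m+1)⁶ = (√2/2) (-1)^⌊(m+1)/2⌋ / (2m+1)⁶`, while its even-indexed terms add up to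
`2⁻⁶` times the same series at `2x = 1/4`. Hence the series equals
`√2 · (2π)⁶ / (2 · 6!) · (B₆(1/8) - B₆(1/4) / 2⁶)`.
-/

open Real

theorem HasSum.odd_of_even {α : Type*} [AddCommGroup α] [TopologicalSpace α]
    [IsTopologicalAddGroup α] {f : ℕ → α} {a b : α} (hf : HasSum f a)
    (heven : HasSum (fun k => f (2 * k)) b) : HasSum (fun k => f (2 * k + 1)) (a - b) := by
  set e : ℕ → α := fun n => if Even n then f n else 0
  have he : HasSum e b := by
    refine (Function.Injective.hasSum_iff (g := (2 * ·)) (fun _ _ => by simp) ?_).mp ?_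
    · rintro n hn
      simp only [e, ite_eq_right_iff]
      rintro ⟨r, rfl⟩
      exact absurd ⟨r, by ring⟩ hn
    · simpa [e, Function.comp_def] using heven
  have hodd : HasSum (fun n => f n - e n) (a - b) := hf.sub he
  have hodd_support : ∀ n ∉ Set.range (2 * · + 1), f n - e n = 0 := by
    rintro n hn
    simp only [e]
    split_ifs with h
    · exact sub_self _
    · obtain ⟨r, rfl⟩ := Nat.not_even_iff_odd.mp h
      exact absurd ⟨r, rfl⟩ hn
  refine ((Function.Injective.hasSum_iff (fun _ _ => by simp) hodd_support).mpr hodd).congr_fun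
    fun k => ?_
  simp [e]

theorem bernoulli'_five : bernoulli' 5 = 0 := by
  rw [bernoulli'_def]
  norm_num [Finset.sum_range_succ, bernoulli'_zero, bernoulli'_one, bernoulli'_two,
    bernoulli'_three, bernoulli'_four, Nat.choose]

theorem bernoulli'_six : bernoulli' 6 = 1 / 42 := by
  rw [bernoulli'_def]
  norm_num [Finset.sum_range_succ, bernoulli'_zero, bernoulli'_one, bernoulli'_two,
    bernoulli'_three, bernoulli'_four, bernoulli'_five, Nat.choose]

theorem bernoulliFun_six (x : ℝ) :
    bernoulliFun 6 x = x ^ 6 - 3 * x ^ 5 + 5 / 2 * x ^ 4 - 1 / 2 * x ^ 2 + 1 / 42 := by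
  rw [bernoulliFun, Polynomial.bernoulli]
  norm_num [Finset.sum_range_succ, Polynomial.eval_monomial, bernoulli_one,
    bernoulli_eq_bernoulli'_of_ne_one, bernoulli'_two, bernoulli'_three,
    bernoulli'_four, bernoulli'_five, bernoulli'_six, Nat.choose]
  ring

theorem cos_odd_mul_pi_div_four (n : ℕ) :
    cos ((2 * n + 1) * π / 4) = √2 / 2 * (-1) ^ ((n + 1) / 2) := by
  induction n using Nat.twoStepInduction with
  | zero => simp [cos_pi_div_four]
  | one =>
    rw [show (2 * ((1 : ℕ) : ℝ) + 1) * π / 4 = π - π / 4 by push_cast; ring, cos_pi_sub,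
      cos_pi_div_four]
    norm_num
  | more n ih _ =>
    rw [show (2 * ((n + 2 : ℕ) : ℝ) + 1) * π / 4 = (2 * n + 1) * π / 4 + π by push_cast; ring,
      cos_add_pi, ih, show (n + 2 + 1) / 2 = (n + 1) / 2 + 1 by omega, pow_succ]
    ring

theorem hasSum_one_div_odd_pow_mul_cos {k : ℕ} (hk : k ≠ 0) {x : ℝ}
    (hx : x ∈ Set.Icc (0 : ℝ) (1 / 2)) :
    HasSum (fun m : ℕ => 1 / ((2 * m + 1 : ℕ) : ℝ) ^ (2 * k) * cos (2 * π * (2 * m + 1 : ℕ) * x))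
      ((-1 : ℝ) ^ (k + 1) * (2 * π) ^ (2 * k) / 2 / (2 * k).factorial *
        (bernoulliFun (2 * k) x - bernoulliFun (2 * k) (2 * x) / 2 ^ (2 * k))) := by
  have hall := hasSum_one_div_nat_pow_mul_cos hk ⟨hx.1, by linarith [hx.2]⟩
  -- the even-indexed terms at `x` are the whole series at `2 * x`, scaled by `2 ^ (-2k)`
  have heven := (hasSum_one_div_nat_pow_mul_cos hk (x := 2 * x)
    ⟨by linarith [hx.1], by linarith [hx.2]⟩).mul_left (1 / 2 ^ (2 * k))
  rw [mul_sub, mul_div, ← mul_one_div (_ * bernoulliFun _ _), mul_comm _ (1 / _)]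
  refine hall.odd_of_even (heven.congr_fun fun m => ?_)
  push_cast
  rw [mul_pow]
  ring_nf

theorem stmt_19 :
    HasSum (fun n : ℕ => (-1 : ℝ) ^ ((n + 1) / 2) / (2 * (n + 1 : ℝ) - 1) ^ 6)
      (Real.sqrt 2 * (361 * π ^ 6) / 491520) := by
  have h := (hasSum_one_div_odd_pow_mul_cos (k := 3) (by norm_num) (x := 1 / 8)
    ⟨by norm_num, by norm_num⟩).mul_left (√2)
  rw [bernoulliFun_six, bernoulliFun_six] at h
  convert h using 1
  · rfl
  · funext n
    have hsqrt : √2 * √2 = 2 := Real.mul_self_sqrt zero_le_two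
    rw [show 2 * π * ((2 * n + 1 : ℕ) : ℝ) * (1 / 8) = (2 * n + 1) * π / 4 by push_cast; ring,
      cos_odd_mul_pi_div_four, show ((2 * n + 1 : ℕ) : ℝ) = 2 * (n + 1) - 1 by push_cast; ring]
    linear_combination -((-1 : ℝ) ^ ((n + 1) / 2) / (2 * (n + 1 : ℝ) - 1) ^ 6 / 2) * hsqrt
  · norm_num [Nat.factorial]
    ring
end
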